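/- (Corollary 1) Let N ≥ 2 and let A(t) = (a_{ij}(t)), t ≥ 0, be a family of irreducible symmetric N×N matrices satisfying Condition A2 whose largest nonzero eigenvalue λ_2(t) satisfies λ_2(t) ≤ λ < 0 for all t. Let Γ = diag(γ_1,…,γ_n) be positive definite and suppose f ∈ QUAD(Δ,ϖ) with ϖ > 0. Let α > 0 and let x_1,…,x_N : [0,∞) → ℝ^n and c : [0,∞) → ℝ be differentiable functions satisfying, for all t ≥ 0, ẋ_i(t) = f(x_i(t),t) + c(t) Σ_{j≠i} a_{ij}(t) Γ (x_j(t) − x_i(t)), ċ(t) = −(α/2) Σ_{i,j} a_{ij}(t) x_i(t)^T Γ x_j(t), and c(0) = 0. Then ‖x_i(t) − x_j(t)‖ → 0 as t → ∞ for all i, j, and c(t) converges to a finite limit. -/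

import Mathlib

open Matrix Filter Set Topology

/-!
Let `D` be the disagreement `∑ᵢ ‖xᵢ - x̄‖²` about the agents' mean `x̄`, and `Q = ∑ᵢⱼ aᵢⱼ xᵢᵀ Γ xⱼ`
the coupling that drives the gain, `ċ = -(α/2) Q`. Because `A` has zero row and column sums,
`x` may be replaced by `x - x̄` in `Q`, so the spectral bound gives `Q ≤ λ γ_min D ≤ 0`: the gain
`c` is nondecreasing and nonnegative. QUAD gives `Ḋ ≤ 2 (L D + c Q)` with `L = max δ - ϖ`. For
`m` large, `V = D + (c - m)² / (α/2)` satisfies `V̇ ≤ 2 (L D + m Q) ≤ -D`, the `c Q` terms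
cancelling. Hence `V` is bounded and decreasing; this bounds `c`, which therefore converges, and
by the mean value theorem on `[t - 1, t]` and Grönwall for `Ḋ ≤ 2 L D`,
`D t ≤ e^{2|L|} (V (t - 1) - V t) → 0`.
-/

section Calculus

variable {f f' : ℝ → ℝ} {a : ℝ}

theorem monotoneOn_Ici_of_hasDerivAt_nonneg (hf : ∀ t, a ≤ t → HasDerivAt f (f' t) t)
    (hf' : ∀ t, a ≤ t → 0 ≤ f' t) : MonotoneOn f (Ici a) :=
  monotoneOn_of_hasDerivWithinAt_nonneg (convex_Ici a)
    (fun t ht => (hf t ht).continuousAt.continuousWithinAt)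
    (fun t ht => (hf t (interior_subset ht)).hasDerivWithinAt)
    (fun t ht => hf' t (interior_subset ht))

theorem antitoneOn_Ici_of_hasDerivAt_nonpos (hf : ∀ t, a ≤ t → HasDerivAt f (f' t) t)
    (hf' : ∀ t, a ≤ t → f' t ≤ 0) : AntitoneOn f (Ici a) :=
  antitoneOn_of_hasDerivWithinAt_nonpos (convex_Ici a)
    (fun t ht => (hf t ht).continuousAt.continuousWithinAt)
    (fun t ht => (hf t (interior_subset ht)).hasDerivWithinAt)
    (fun t ht => hf' t (interior_subset ht))

theorem exists_tendsto_of_monotoneOn_Ici {C : ℝ} (hf : MonotoneOn f (Ici a))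
    (hC : ∀ t, a ≤ t → f t ≤ C) : ∃ l, Tendsto f atTop (𝓝 l) := by
  have hmono : Monotone fun t => f (max t a) := fun s t hst =>
    hf (le_max_right s a) (le_max_right t a) (max_le_max_right a hst)
  refine ⟨_, (tendsto_atTop_ciSup hmono ⟨C, ?_⟩).congr' ?_⟩
  · rintro _ ⟨t, rfl⟩
    exact hC _ (le_max_right t a)
  · filter_upwards [eventually_ge_atTop a] with t ht
    rw [max_eq_left ht]

theorem le_mul_exp_of_hasDerivAt_le {D D' : ℝ → ℝ} {K s t : ℝ} (hst : s ≤ t)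
    (hD : ∀ u ∈ Icc s t, HasDerivAt D (D' u) u) (hDK : ∀ u ∈ Ico s t, D' u ≤ K * D u) :
    D t ≤ D s * Real.exp (K * (t - s)) := by
  have h := le_gronwallBound_of_liminf_deriv_right_le (ε := 0)
    (fun u hu => (hD u hu).continuousAt.continuousWithinAt)
    (fun u hu _ hr => (hD u (Ico_subset_Icc_self hu)).hasDerivWithinAt.liminf_right_slope_le hr)
    le_rfl (fun u hu => by simpa using hDK u hu) t ⟨hst, le_rfl⟩
  rwa [gronwallBound_ε0] at h

theorem tendsto_zero_of_hasDerivAt_le_neg {V V' D D' : ℝ → ℝ} {B K : ℝ}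
    (hV : ∀ t, 0 ≤ t → HasDerivAt V (V' t) t) (hVD : ∀ t, 0 ≤ t → V' t ≤ -D t)
    (hVB : ∀ t, 0 ≤ t → B ≤ V t)
    (hD : ∀ t, 0 ≤ t → HasDerivAt D (D' t) t) (hDK : ∀ t, 0 ≤ t → D' t ≤ K * D t)
    (hD0 : ∀ t, 0 ≤ t → 0 ≤ D t) : Tendsto D atTop (𝓝 0) := by
  have hVanti : AntitoneOn V (Ici 0) := antitoneOn_Ici_of_hasDerivAt_nonpos hV fun t ht =>
    (hVD t ht).trans (neg_nonpos.2 (hD0 t ht))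
  obtain ⟨l, hl⟩ : ∃ l, Tendsto V atTop (𝓝 l) := by
    obtain ⟨l, hl⟩ := exists_tendsto_of_monotoneOn_Ici (f := fun t => -V t)
      (fun s hs t ht hst => neg_le_neg (hVanti hs ht hst)) fun t ht => neg_le_neg (hVB t ht)
    exact ⟨-l, by simpa using hl.neg⟩
  -- the drop of `V` over `[t - 1, t]` bounds `D` somewhere in between; Grönwall carries it to `t`
  have hbound : ∀ t, 1 ≤ t → D t ≤ Real.exp |K| * (V (t - 1) - V t) := by
    intro t ht
    obtain ⟨ξ, hξ, hslope⟩ := exists_hasDerivAt_eq_slope V V' (sub_one_lt t)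
      (fun u hu => (hV u (by linarith [hu.1])).continuousAt.continuousWithinAt)
      (fun u hu => hV u (by linarith [hu.1]))
    rw [sub_sub_cancel, div_one] at hslope
    have hDξ : D ξ ≤ V (t - 1) - V t := by linarith [hVD ξ (by linarith [hξ.1])]
    have hgrowth : D t ≤ D ξ * Real.exp (K * (t - ξ)) :=
      le_mul_exp_of_hasDerivAt_le hξ.2.le (fun u hu => hD u (by linarith [hu.1, hξ.1]))
        (fun u hu => hDK u (by linarith [hu.1, hξ.1]))
    have hexp : Real.exp (K * (t - ξ)) ≤ Real.exp |K| := by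
      gcongr
      nlinarith [le_abs_self K, abs_nonneg K, hξ.1, hξ.2]
    calc D t ≤ D ξ * Real.exp (K * (t - ξ)) := hgrowth
      _ ≤ (V (t - 1) - V t) * Real.exp |K| :=
        mul_le_mul hDξ hexp (Real.exp_pos _).le ((hD0 ξ (by linarith [hξ.1])).trans hDξ)
      _ = Real.exp |K| * (V (t - 1) - V t) := mul_comm _ _
  have hdrop : Tendsto (fun t => Real.exp |K| * (V (t - 1) - V t)) atTop (𝓝 0) := by
    have hshift := hl.comp (tendsto_atTop_add_const_right atTop (-1) tendsto_id)
    simpa [Function.comp_def, ← sub_eq_add_neg] using (hshift.sub hl).const_mul (Real.exp |K|)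
  exact tendsto_of_tendsto_of_tendsto_of_le_of_le' tendsto_const_nhds hdrop
    ((eventually_ge_atTop 0).mono hD0) ((eventually_ge_atTop 1).mono hbound)

theorem tendsto_zero_and_exists_tendsto_of_adaptive_gain {D D' c Q : ℝ → ℝ} {L μ β : ℝ}
    (hμ : 0 < μ) (hβ : 0 < β) (hD : ∀ t, 0 ≤ t → HasDerivAt D (D' t) t)
    (hD' : ∀ t, 0 ≤ t → D' t ≤ 2 * (L * D t + c t * Q t)) (hD0 : ∀ t, 0 ≤ t → 0 ≤ D t)
    (hc : ∀ t, 0 ≤ t → HasDerivAt c (-β * Q t) t) (hc0 : 0 ≤ c 0)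
    (hQ : ∀ t, 0 ≤ t → Q t ≤ -μ * D t) :
    Tendsto D atTop (𝓝 0) ∧ ∃ c₀, Tendsto c atTop (𝓝 c₀) := by
  have hQ0 : ∀ t, 0 ≤ t → Q t ≤ 0 := fun t ht => (hQ t ht).trans (by nlinarith [hD0 t ht])
  have hcmono : MonotoneOn c (Ici 0) :=
    monotoneOn_Ici_of_hasDerivAt_nonneg hc fun t ht => by nlinarith [hQ0 t ht]
  have hcnn : ∀ t, 0 ≤ t → 0 ≤ c t := fun t ht => hc0.trans (hcmono self_mem_Ici ht ht)
  obtain ⟨m, hm0, hm⟩ : ∃ m, 0 ≤ m ∧ 2 * (L - m * μ) ≤ -1 := by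
    refine ⟨max 0 ((2 * L + 1) / (2 * μ)), le_max_left _ _, ?_⟩
    have h := (div_le_iff₀ (by positivity)).1 (le_max_right 0 ((2 * L + 1) / (2 * μ)))
    linarith
  set V := fun t => D t + (c t - m) ^ 2 / β
  have hV : ∀ t, 0 ≤ t → HasDerivAt V (D' t - 2 * (c t - m) * Q t) t := by
    intro t ht
    refine ((hD t ht).fun_add ((((hc t ht).sub_const m).fun_pow 2).div_const β)).congr_deriv ?_
    field_simp
    ring
  have hVD : ∀ t, 0 ≤ t → D' t - 2 * (c t - m) * Q t ≤ -D t := by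
    intro t ht
    nlinarith [hD' t ht, mul_le_mul_of_nonneg_left (hQ t ht) hm0, hD0 t ht]
  have hV0 : ∀ t, 0 ≤ t → 0 ≤ V t := fun t ht => add_nonneg (hD0 t ht) (by positivity)
  have hVanti : AntitoneOn V (Ici 0) := antitoneOn_Ici_of_hasDerivAt_nonpos hV fun t ht =>
    (hVD t ht).trans (neg_nonpos.2 (hD0 t ht))
  have hcC : ∀ t, 0 ≤ t → c t ≤ m + β * V 0 + 1 := by
    intro t ht
    have h : (c t - m) ^ 2 / β ≤ V 0 := by linarith [hVanti self_mem_Ici ht ht, hD0 t ht]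
    rw [div_le_iff₀ hβ] at h
    nlinarith [sq_nonneg (c t - m - 1)]
  refine ⟨tendsto_zero_of_hasDerivAt_le_neg hV hVD hV0 hD (K := 2 * L) (fun t ht => ?_) hD0,
    exists_tendsto_of_monotoneOn_Ici hcmono hcC⟩
  nlinarith [hD' t ht, mul_nonpos_of_nonneg_of_nonpos (hcnn t ht) (hQ0 t ht)]

end Calculus

section Laplacian

variable {ι : Type*} [Fintype ι] {M : Matrix ι ι ℝ}

theorem sum_eq_zero_of_diag_eq_neg_sum_erase [DecidableEq ι] {i : ι}
    (hdiag : M i i = -∑ j ∈ Finset.univ.erase i, M i j) : ∑ j, M i j = 0 := by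
  rw [← Finset.add_sum_erase _ _ (Finset.mem_univ i), hdiag, neg_add_cancel]

theorem sum_erase_mul_sub_eq_mulVec [DecidableEq ι] {i : ι}
    (hdiag : M i i = -∑ j ∈ Finset.univ.erase i, M i j) (v : ι → ℝ) :
    ∑ j ∈ Finset.univ.erase i, M i j * (v j - v i) = (M *ᵥ v) i := by
  rw [mulVec, dotProduct, ← Finset.add_sum_erase _ _ (Finset.mem_univ i), hdiag]
  simp only [mul_sub, Finset.sum_sub_distrib, ← Finset.sum_mul]
  ring

theorem mulVec_sub_const (hrow : ∀ i, ∑ j, M i j = 0) (v : ι → ℝ) (a : ℝ) :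
    M *ᵥ (v - fun _ => a) = M *ᵥ v := by
  ext i
  simp [mulVec, dotProduct, mul_sub, Finset.sum_sub_distrib, ← Finset.sum_mul, hrow]

theorem const_dotProduct_mulVec (hcol : ∀ j, ∑ i, M i j = 0) (a : ℝ) (w : ι → ℝ) :
    (fun _ => a) ⬝ᵥ M *ᵥ w = 0 := by
  rw [dotProduct_mulVec]
  convert zero_dotProduct w
  ext j
  simp [vecMul, dotProduct, ← Finset.mul_sum, hcol]

end Laplacian

theorem sum_mul_sub_le_of_quad {κ : Type*} [Fintype κ] {F : (κ → ℝ) → κ → ℝ} {δ : κ → ℝ}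
    {ϖ d : ℝ} (hd : ∀ k, δ k ≤ d) {y z : κ → ℝ}
    (hF : (∑ k, (y k - z k) * (F y k - F z k)) - ∑ k, δ k * (y k - z k) ^ 2
      ≤ -ϖ * ∑ k, (y k - z k) ^ 2) :
    ∑ k, (y k - z k) * (F y k - F z k) ≤ (d - ϖ) * ∑ k, (y k - z k) ^ 2 := by
  have hδ : ∑ k, δ k * (y k - z k) ^ 2 ≤ d * ∑ k, (y k - z k) ^ 2 := by
    rw [Finset.mul_sum]
    gcongr with k
    exact hd k
  linarith

theorem exists_pos_le_of_forall_pos {κ : Type*} [Finite κ] {γ : κ → ℝ} (hγ : ∀ k, 0 < γ k) :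
    ∃ g, 0 < g ∧ ∀ k, g ≤ γ k := by
  rcases isEmpty_or_nonempty κ with hκ | hκ
  · exact ⟨1, one_pos, isEmptyElim⟩
  · obtain ⟨k₀, hk₀⟩ := Finite.exists_min γ
    exact ⟨γ k₀, hγ k₀, hk₀⟩

namespace Consensus

variable {ι κ : Type*} [Fintype ι]

noncomputable def mean (X : ι → κ → ℝ) (k : κ) : ℝ := (∑ i, X i k) / Fintype.card ι

noncomputable def deviation (X : ι → κ → ℝ) (i : ι) (k : κ) : ℝ := X i k - mean X k

noncomputable def disagreement [Fintype κ] (X : ι → κ → ℝ) : ℝ := ∑ i, ∑ k, deviation X i k ^ 2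

noncomputable def coupling [Fintype κ] (A : Matrix ι ι ℝ) (γ : κ → ℝ) (X : ι → κ → ℝ) : ℝ :=
  ∑ i, ∑ j, A i j * ∑ k, X i k * γ k * X j k

theorem sum_deviation (X : ι → κ → ℝ) (k : κ) : ∑ i, deviation X i k = 0 := by
  rcases isEmpty_or_nonempty ι with hι | hι
  · simp
  · simp [deviation, mean, Finset.sum_sub_distrib, Finset.card_univ, mul_div_cancel₀,
      Fintype.card_ne_zero]

theorem sum_deviation_mul (X : ι → κ → ℝ) (k : κ) (a : ℝ) : ∑ i, deviation X i k * a = 0 := by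
  rw [← Finset.sum_mul, sum_deviation, zero_mul]

theorem disagreement_nonneg [Fintype κ] (X : ι → κ → ℝ) : 0 ≤ disagreement X := by
  unfold disagreement
  positivity

theorem sq_deviation_le_disagreement [Fintype κ] (X : ι → κ → ℝ) (i : ι) (k : κ) :
    deviation X i k ^ 2 ≤ disagreement X :=
  (Finset.single_le_sum (f := fun k => deviation X i k ^ 2) (fun _ _ => sq_nonneg _)
    (Finset.mem_univ k)).trans
  (Finset.single_le_sum (f := fun i => ∑ k, deviation X i k ^ 2)
    (fun _ _ => Finset.sum_nonneg fun _ _ => sq_nonneg _) (Finset.mem_univ i))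

theorem sum_sum_deviation_mul_deviation [Fintype κ] (X U : ι → κ → ℝ) :
    ∑ i, ∑ k, deviation X i k * deviation U i k = ∑ i, ∑ k, deviation X i k * U i k := by
  rw [Finset.sum_comm, Finset.sum_comm (f := fun i k => deviation X i k * U i k)]
  refine Finset.sum_congr rfl fun k _ => ?_
  have h : ∀ i, deviation X i k * deviation U i k
      = deviation X i k * U i k - deviation X i k * mean U k := fun i => mul_sub _ _ _
  simp only [h, Finset.sum_sub_distrib, sum_deviation_mul, sub_zero]

theorem hasDerivAt_disagreement [Fintype κ] {X : ℝ → ι → κ → ℝ} {U : ι → κ → ℝ} {t : ℝ}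
    (hX : ∀ i, HasDerivAt (fun s => X s i) (U i) t) :
    HasDerivAt (fun s => disagreement (X s)) (2 * ∑ i, ∑ k, deviation (X t) i k * U i k) t := by
  have hdev : ∀ i k, HasDerivAt (fun s => deviation (X s) i k) (deviation U i k) t :=
    fun i k => (hasDerivAt_pi.1 (hX i) k).sub
      ((HasDerivAt.fun_sum fun j _ => hasDerivAt_pi.1 (hX j) k).div_const _)
  refine (HasDerivAt.fun_sum fun i _ => HasDerivAt.fun_sum fun k _ =>
    (hdev i k).fun_pow 2).congr_deriv ?_
  rw [← sum_sum_deviation_mul_deviation, Finset.mul_sum]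
  simp only [Finset.mul_sum]
  ring_nf

theorem coupling_eq_sum_dotProduct [Fintype κ] (A : Matrix ι ι ℝ) (γ : κ → ℝ) (X : ι → κ → ℝ) :
    coupling A γ X = ∑ k, γ k * ((fun i => X i k) ⬝ᵥ A *ᵥ fun i => X i k) := by
  simp only [coupling, dotProduct, mulVec, Finset.mul_sum]
  conv_rhs => rw [Finset.sum_comm]; arg 2; ext i; rw [Finset.sum_comm]
  exact Finset.sum_congr rfl fun i _ => Finset.sum_congr rfl fun j _ =>
    Finset.sum_congr rfl fun k _ => by ring

theorem deviation_dotProduct_mulVec {A : Matrix ι ι ℝ} (hcol : ∀ j, ∑ i, A i j = 0)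
    (X : ι → κ → ℝ) (k : κ) (w : ι → ℝ) :
    (fun i => deviation X i k) ⬝ᵥ A *ᵥ w = (fun i => X i k) ⬝ᵥ A *ᵥ w := by
  change ((fun i => X i k) - fun _ => mean X k) ⬝ᵥ A *ᵥ w = _
  rw [sub_dotProduct, const_dotProduct_mulVec hcol, sub_zero]

theorem coupling_le [Fintype κ] {A : Matrix ι ι ℝ} {γ : κ → ℝ} {lam g : ℝ}
    (hrow : ∀ i, ∑ j, A i j = 0) (hcol : ∀ j, ∑ i, A i j = 0)
    (hspec : ∀ v : ι → ℝ, ∑ i, v i = 0 → v ⬝ᵥ A *ᵥ v ≤ lam * ∑ i, v i ^ 2)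
    (hlam : lam ≤ 0) (hg : 0 ≤ g) (hgγ : ∀ k, g ≤ γ k) (X : ι → κ → ℝ) :
    coupling A γ X ≤ lam * g * disagreement X := by
  rw [coupling_eq_sum_dotProduct, disagreement, Finset.sum_comm, Finset.mul_sum]
  refine Finset.sum_le_sum fun k _ => ?_
  have hquad : (fun i => X i k) ⬝ᵥ A *ᵥ (fun i => X i k)
      = (fun i => deviation X i k) ⬝ᵥ A *ᵥ (fun i => deviation X i k) := by
    rw [deviation_dotProduct_mulVec hcol]
    exact congrArg _ (mulVec_sub_const hrow _ (mean X k)).symm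
  have hs : 0 ≤ ∑ i, deviation X i k ^ 2 := by positivity
  rw [hquad]
  nlinarith [mul_le_mul_of_nonneg_left (hspec _ (sum_deviation X k)) (hg.trans (hgγ k)),
    mul_nonneg (sub_nonneg.2 (hgγ k)) (mul_nonneg (neg_nonneg.2 hlam) hs)]

theorem sum_deviation_mul_velocity [Fintype κ] {A : Matrix ι ι ℝ} (hcol : ∀ j, ∑ i, A i j = 0)
    (F : (κ → ℝ) → κ → ℝ) (γ : κ → ℝ) (c : ℝ) (X : ι → κ → ℝ) :
    ∑ i, ∑ k, deviation X i k * (F (X i) k + c * (γ k * (A *ᵥ fun j => X j k) i))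
      = ∑ i, ∑ k, deviation X i k * (F (X i) k - F (mean X) k) + c * coupling A γ X := by
  have hF : ∑ i, ∑ k, deviation X i k * F (mean X) k = 0 := by
    rw [Finset.sum_comm]
    exact Finset.sum_eq_zero fun k _ => sum_deviation_mul X k _
  have hA : ∑ i, ∑ k, deviation X i k * (c * (γ k * (A *ᵥ fun j => X j k) i))
      = c * coupling A γ X := by
    rw [coupling_eq_sum_dotProduct, Finset.sum_comm, Finset.mul_sum]
    refine Finset.sum_congr rfl fun k _ => ?_
    rw [← deviation_dotProduct_mulVec hcol X k, dotProduct, Finset.mul_sum, Finset.mul_sum]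
    exact Finset.sum_congr rfl fun i _ => by ring
  simp only [mul_add, mul_sub, Finset.sum_add_distrib, Finset.sum_sub_distrib, hF, hA, sub_zero]

theorem sum_deviation_mul_sub_le [Fintype κ] {F : (κ → ℝ) → κ → ℝ} {L : ℝ}
    (hF : ∀ y z : κ → ℝ, ∑ k, (y k - z k) * (F y k - F z k) ≤ L * ∑ k, (y k - z k) ^ 2)
    (X : ι → κ → ℝ) :
    ∑ i, ∑ k, deviation X i k * (F (X i) k - F (mean X) k) ≤ L * disagreement X := by
  rw [disagreement, Finset.mul_sum]
  exact Finset.sum_le_sum fun i _ => hF (X i) (mean X)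

theorem tendsto_norm_sub_of_tendsto_disagreement [Fintype κ] {α : Type*} {l : Filter α}
    {X : α → ι → κ → ℝ} (h : Tendsto (fun t => disagreement (X t)) l (𝓝 0)) (i j : ι) :
    Tendsto (fun t => ‖X t i - X t j‖) l (𝓝 0) := by
  have hdev : ∀ i k, Tendsto (fun t => deviation (X t) i k) l (𝓝 0) := fun i k =>
    squeeze_zero_norm (fun t => Real.abs_le_sqrt (sq_deviation_le_disagreement _ i k))
      (by simpa [Function.comp_def] using (Real.continuous_sqrt.tendsto 0).comp h)
  have hsub : Tendsto (fun t => X t i - X t j) l (𝓝 0) := tendsto_pi_nhds.2 fun k => by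
    simpa [deviation] using (hdev i k).sub (hdev j k)
  simpa using hsub.norm

end Consensus

open Consensus

theorem stmt15_general (N n : ℕ) (A : ℝ → Matrix (Fin N) (Fin N) ℝ)
    (hsym : ∀ t : ℝ, 0 ≤ t → ∀ i j, A t i j = A t j i)
    (hdiag : ∀ t : ℝ, 0 ≤ t → ∀ i, A t i i = -∑ j ∈ Finset.univ.erase i, A t i j)
    (lam : ℝ) (hlam : lam < 0)
    (hspec : ∀ t : ℝ, 0 ≤ t → ∀ v : Fin N → ℝ, (∑ i, v i) = 0 →
      v ⬝ᵥ (A t).mulVec v ≤ lam * ∑ i, (v i) ^ 2)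
    (γ : Fin n → ℝ) (hγ : ∀ k, 0 < γ k)
    (δ : Fin n → ℝ) (ϖ : ℝ)
    (f : (Fin n → ℝ) → ℝ → (Fin n → ℝ))
    (hQUAD : ∀ x y : Fin n → ℝ, ∀ t : ℝ, 0 ≤ t →
      (∑ k, (x k - y k) * (f x t k - f y t k)) - (∑ k, δ k * (x k - y k) ^ 2)
        ≤ -ϖ * ∑ k, (x k - y k) ^ 2)
    (α : ℝ) (hα : 0 < α)
    (x : Fin N → ℝ → (Fin n → ℝ)) (c : ℝ → ℝ) (hc0 : c 0 = 0)
    (hODE : ∀ i, ∀ t : ℝ, 0 ≤ t →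
      HasDerivAt (x i)
        (fun k => f (x i t) t k
          + c t * ∑ j ∈ Finset.univ.erase i, A t i j * (γ k * (x j t k - x i t k))) t)
    (hcODE : ∀ t : ℝ, 0 ≤ t →
      HasDerivAt c (-(α / 2) * ∑ i, ∑ j, A t i j * ∑ k, x i t k * γ k * x j t k) t) :
    (∀ i j, Tendsto (fun t => ‖x i t - x j t‖) atTop (nhds 0)) ∧
    ∃ c₀ : ℝ, Tendsto c atTop (nhds c₀) := by
  obtain ⟨g, hg, hgγ⟩ := exists_pos_le_of_forall_pos hγ
  obtain ⟨d, hd⟩ := (Set.finite_range δ).bddAbove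
  have hrow : ∀ t, 0 ≤ t → ∀ i, ∑ j, A t i j = 0 := fun t ht i =>
    sum_eq_zero_of_diag_eq_neg_sum_erase (hdiag t ht i)
  have hcol : ∀ t, 0 ≤ t → ∀ j, ∑ i, A t i j = 0 := fun t ht j =>
    (Finset.sum_congr rfl fun i _ => hsym t ht i j).trans (hrow t ht j)
  have hx : ∀ t, 0 ≤ t → ∀ i, HasDerivAt (x i)
      (fun k => f (x i t) t k + c t * (γ k * (A t *ᵥ fun j => x j t k) i)) t := by
    intro t ht i
    simpa only [mul_left_comm _ (γ _), ← Finset.mul_sum,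
      sum_erase_mul_sub_eq_mulVec (hdiag t ht i)] using hODE i t ht
  obtain ⟨hD, hc⟩ := tendsto_zero_and_exists_tendsto_of_adaptive_gain
    (L := d - ϖ) (μ := -lam * g) (β := α / 2) (Q := fun t => coupling (A t) γ fun i => x i t)
    (by nlinarith) (by positivity)
    (fun t ht => hasDerivAt_disagreement (X := fun t i => x i t) (hx t ht))
    (fun t ht => by
      rw [sum_deviation_mul_velocity (hcol t ht) (fun y => f y t) γ (c t) fun i => x i t]
      gcongr
      exact sum_deviation_mul_sub_le (fun y z => sum_mul_sub_le_of_quad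
        (fun k => hd (Set.mem_range_self k)) (hQUAD y z t ht)) fun i => x i t)
    (fun t _ => disagreement_nonneg _) hcODE hc0.ge
    (fun t ht => (coupling_le (hrow t ht) (hcol t ht) (hspec t ht) hlam.le hg.le hgγ _).trans_eq
      (by ring))
  exact ⟨tendsto_norm_sub_of_tendsto_disagreement hD, hc⟩

/-- Corollary 1: A(t), t ≥ 0, is a family of irreducible symmetric
matrices satisfying Condition A2 with largest nonzero eigenvalue λ₂(t) ≤ λ < 0
(expressed variationally on the orthogonal complement of the all-ones vector).
With Γ = diag(γ) > 0, f ∈ QUAD(Δ,ϖ), and the adaptive scheme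
ẋᵢ = f(xᵢ,t) + c(t) Σ_{j≠i} a_{ij}(t) Γ(xⱼ − xᵢ),
ċ = −(α/2) Σᵢⱼ a_{ij}(t) xᵢᵀΓxⱼ, c(0) = 0,
then ‖xᵢ(t) − xⱼ(t)‖ → 0 for all i,j and c(t) converges to a finite limit. -/
theorem stmt15 (N n : ℕ) (hN : 2 ≤ N) (A : ℝ → Matrix (Fin N) (Fin N) ℝ)
    (hsym : ∀ t : ℝ, 0 ≤ t → ∀ i j, A t i j = A t j i)
    (hoff : ∀ t : ℝ, 0 ≤ t → ∀ i j, i ≠ j → 0 ≤ A t i j)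
    (hdiag : ∀ t : ℝ, 0 ≤ t → ∀ i, A t i i = -∑ j ∈ Finset.univ.erase i, A t i j)
    (hirr : ∀ t : ℝ, 0 ≤ t → ∀ S : Finset (Fin N), S.Nonempty → S ≠ Finset.univ →
      ∃ i ∈ S, ∃ j, j ∉ S ∧ A t i j ≠ 0)
    (lam : ℝ) (hlam : lam < 0)
    (hspec : ∀ t : ℝ, 0 ≤ t → ∀ v : Fin N → ℝ, (∑ i, v i) = 0 →
      v ⬝ᵥ (A t).mulVec v ≤ lam * ∑ i, (v i) ^ 2)
    (γ : Fin n → ℝ) (hγ : ∀ k, 0 < γ k)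
    (δ : Fin n → ℝ) (ϖ : ℝ) (hϖ : 0 < ϖ)
    (f : (Fin n → ℝ) → ℝ → (Fin n → ℝ))
    (hf : Continuous fun p : (Fin n → ℝ) × ℝ => f p.1 p.2)
    (hQUAD : ∀ x y : Fin n → ℝ, ∀ t : ℝ, 0 ≤ t →
      (∑ k, (x k - y k) * (f x t k - f y t k)) - (∑ k, δ k * (x k - y k) ^ 2)
        ≤ -ϖ * ∑ k, (x k - y k) ^ 2)
    (α : ℝ) (hα : 0 < α)
    (x : Fin N → ℝ → (Fin n → ℝ)) (c : ℝ → ℝ) (hc0 : c 0 = 0)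
    (hODE : ∀ i, ∀ t : ℝ, 0 ≤ t →
      HasDerivAt (x i)
        (fun k => f (x i t) t k
          + c t * ∑ j ∈ Finset.univ.erase i, A t i j * (γ k * (x j t k - x i t k))) t)
    (hcODE : ∀ t : ℝ, 0 ≤ t →
      HasDerivAt c (-(α / 2) * ∑ i, ∑ j, A t i j * ∑ k, x i t k * γ k * x j t k) t) :
    (∀ i j, Tendsto (fun t => ‖x i t - x j t‖) atTop (nhds 0)) ∧
    ∃ c₀ : ℝ, Tendsto c atTop (nhds c₀) :=
  stmt15_general N n A hsym hdiag lam hlam hspec γ hγ δ ϖ f hQUAD α hα x c hc0 hODE hcODE
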